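/- arXiv:1401.0567 — 4 statements merged into one kernel-verified Lean document; each statement's English description precedes it below -/
import Mathlib

section
/- Let n ≥ 2 and let σ : ℤ → ℤ be an n-periodic bijection such that α > 1 is the maximum of |κ_{i,j}(σ)| over all pairs i < j in {1,...,n}, and suppose some pair attains κ = α. Let S = { i ∈ {1,...,n} : ∃ j ∈ {1,...,n}, i < j and κ_{i,j}(σ) = α }, and let σ^S be obtained by adding n to the images of positions in S. Then no pair (i,j) with i < j in {1,...,n} has κ_{i,j}(σ^S) = α, and for every pair with κ_{i,j}(σ) ≠ 0 we have |κ_{i,j}(σ^S)| ≤ |κ_{i,j}(σ)|. -/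
/-- Killing the maximal crossing number: with
S = {i : ∃ j > i, κ_{i,j}(σ) = α}, no pair of σ^S has crossing number α, and the
absolute crossing number of any pair with κ ≠ 0 does not increase. -/
theorem stmt_4 (n : ℤ) (hn : 2 ≤ n) (σ : ℤ → ℤ)
    (hbij : Function.Bijective σ) (hper : ∀ i : ℤ, σ (i + n) = σ i + n)
    (α : ℤ) (hα : 1 < α)
    (hmax : ∀ i j : ℤ, 1 ≤ i → i < j → j ≤ n → |Int.fdiv (σ j - σ i) n| ≤ α)
    (hattain : ∃ i j : ℤ, 1 ≤ i ∧ i < j ∧ j ≤ n ∧ Int.fdiv (σ j - σ i) n = α)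
    (S : Finset ℤ)
    (hSdef : ∀ i : ℤ, i ∈ S ↔ (1 ≤ i ∧ i ≤ n ∧
      ∃ j : ℤ, i < j ∧ j ≤ n ∧ Int.fdiv (σ j - σ i) n = α))
    (σS : ℤ → ℤ)
    (hσS : ∀ i : ℤ, σS i = if ((i - 1) % n + 1) ∈ S then σ i + n else σ i) :
    (∀ i j : ℤ, 1 ≤ i → i < j → j ≤ n → Int.fdiv (σS j - σS i) n ≠ α) ∧
    (∀ i j : ℤ, 1 ≤ i → i < j → j ≤ n → Int.fdiv (σ j - σ i) n ≠ 0 →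
      |Int.fdiv (σS j - σS i) n| ≤ |Int.fdiv (σ j - σ i) n|) := by
  have hn0 : (0:ℤ) < n := by omega
  have hfe : ∀ a : ℤ, Int.fdiv a n = a / n := fun a => Int.fdiv_eq_ediv_of_nonneg a hn0.le
  -- simplify σS on [1, n]
  have hσS' : ∀ i : ℤ, 1 ≤ i → i ≤ n → σS i = if i ∈ S then σ i + n else σ i := by
    intro i h1 h2
    have hmod : (i - 1) % n = i - 1 := Int.emod_eq_of_lt (by omega) (by omega)
    rw [hσS, hmod]
    norm_num
  -- decomposition of (a+b)/n
  have hdec : ∀ a b : ℤ, (a + b) / n = (a % n + b % n) / n + (a / n + b / n) := by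
    intro a b
    have h1 := Int.mul_ediv_add_emod a n
    have h2 := Int.mul_ediv_add_emod b n
    have e : a + b = (a % n + b % n) + (a / n + b / n) * n := by linear_combination -h1 - h2
    rw [e, Int.add_mul_ediv_right _ _ hn0.ne']
  have hadd : ∀ a b : ℤ, a / n + b / n ≤ (a + b) / n := by
    intro a b
    have h : 0 ≤ (a % n + b % n) / n :=
      Int.ediv_nonneg (by have := Int.emod_nonneg a hn0.ne'; have := Int.emod_nonneg b hn0.ne'; omega) hn0.le
    rw [hdec]; omega
  have hsub : ∀ a b : ℤ, (a + b) / n ≤ a / n + b / n + 1 := by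
    intro a b
    have hlt : a % n + b % n < 2 * n := by
      have := Int.emod_lt_of_pos a hn0; have := Int.emod_lt_of_pos b hn0; omega
    have h : (a % n + b % n) / n < 2 := (Int.ediv_lt_iff_lt_mul hn0).2 (by omega)
    rw [hdec]; omega
  -- shift lemmas
  have hplus : ∀ a : ℤ, (a + n) / n = a / n + 1 := by
    intro a
    have := Int.add_mul_ediv_right a 1 hn0.ne'
    simpa using this
  have hminus : ∀ a : ℤ, (a - n) / n = a / n - 1 := by
    intro a
    have := Int.add_mul_ediv_right a (-1) hn0.ne'
    have e : a + -1 * n = a - n := by ring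
    rw [e] at this; omega
  -- chain inequality: κ_{i,j} + κ_{j,k} ≤ κ_{i,k}
  have hchain : ∀ i j k : ℤ, (σ j - σ i) / n + (σ k - σ j) / n ≤ (σ k - σ i) / n := by
    intro i j k
    have := hadd (σ j - σ i) (σ k - σ j)
    have e : σ j - σ i + (σ k - σ j) = σ k - σ i := by ring
    rwa [e] at this
  have hchain' : ∀ i j k : ℤ, (σ k - σ i) / n ≤ (σ j - σ i) / n + (σ k - σ j) / n + 1 := by
    intro i j k
    have := hsub (σ j - σ i) (σ k - σ j)
    have e : σ j - σ i + (σ k - σ j) = σ k - σ i := by ring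
    rwa [e] at this
  have hmax' : ∀ i j : ℤ, 1 ≤ i → i < j → j ≤ n → |(σ j - σ i) / n| ≤ α := by
    intro i j h1 h2 h3
    have := hmax i j h1 h2 h3
    rwa [hfe] at this
  -- if j ∈ S then κ_{i,j} ≤ 0 for any 1 ≤ i < j
  have LjS : ∀ i j : ℤ, 1 ≤ i → i < j → j ∈ S → (σ j - σ i) / n ≤ 0 := by
    intro i j h1 h2 hjS
    obtain ⟨hj1, hj2, k, hjk, hkn, hκ⟩ := (hSdef j).1 hjS
    rw [hfe] at hκ
    have hc := hchain i j k
    have hm := hmax' i k h1 (h2.trans hjk) hkn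
    rw [abs_le] at hm
    omega
  -- if i ∈ S and j ∉ S with 1 ≤ i < j ≤ n then κ_{i,j} ≥ 0
  have LiS : ∀ i j : ℤ, 1 ≤ i → i < j → j ≤ n → i ∈ S → j ∉ S → 0 ≤ (σ j - σ i) / n := by
    intro i j h1 h2 h3 hiS hjS
    by_contra hneg
    push_neg at hneg
    obtain ⟨hi1, hi2, k, hik, hkn, hκ⟩ := (hSdef i).1 hiS
    rw [hfe] at hκ
    rcases lt_trichotomy k j with hkj | hkj | hkj
    · have hc := hchain i k j
      have hm := hmax' k j (by omega) hkj h3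
      rw [abs_le] at hm
      omega
    · subst hkj; omega
    · -- j < k : κ_{j,k} = α, so j ∈ S
      have hc := hchain' i j k
      have hm := hmax' j k (by omega) hkj hkn
      rw [abs_le] at hm
      have : (σ k - σ j) / n = α := by omega
      exact hjS ((hSdef j).2 ⟨by omega, h3, k, hkj, hkn, by rwa [hfe]⟩)
  constructor
  · intro i j h1 h2 h3
    rw [hσS' i h1 (by omega), hσS' j (by omega) h3, hfe]
    by_cases hi : i ∈ S <;> by_cases hj : j ∈ S <;> simp only [hi, hj, if_true, if_false]
    · -- both in S: difference unchanged, but κ = α would force j ∈ S impossible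
      have e : σ j + n - (σ i + n) = σ j - σ i := by ring
      rw [e]
      intro hκ
      have := LjS i j h1 h2 hj
      omega
    · -- i ∈ S, j ∉ S : κ - 1
      have e : σ j - (σ i + n) = (σ j - σ i) - n := by ring
      rw [e, hminus]
      have hm := hmax' i j h1 h2 h3
      rw [abs_le] at hm
      omega
    · -- i ∉ S, j ∈ S : κ + 1
      have e : σ j + n - σ i = (σ j - σ i) + n := by ring
      rw [e, hplus]
      have := LjS i j h1 h2 hj
      omega
    · -- neither : κ = α would give i ∈ S
      intro hκ
      exact hi ((hSdef i).2 ⟨h1, by omega, j, h2, h3, by rwa [hfe]⟩)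
  · intro i j h1 h2 h3 hκ0
    rw [hfe] at hκ0
    rw [hσS' i h1 (by omega), hσS' j (by omega) h3, hfe, hfe]
    by_cases hi : i ∈ S <;> by_cases hj : j ∈ S <;> simp only [hi, hj, if_true, if_false]
    · have e : σ j + n - (σ i + n) = σ j - σ i := by ring
      rw [e]
    · have e : σ j - (σ i + n) = (σ j - σ i) - n := by ring
      rw [e, hminus]
      have hpos := LiS i j h1 h2 h3 hi hj
      have h1' : 1 ≤ (σ j - σ i) / n := by omega
      rw [abs_of_nonneg (by omega), abs_of_nonneg (by omega)]
      omega
    · have e : σ j + n - σ i = (σ j - σ i) + n := by ring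
      rw [e, hplus]
      have hneg := LjS i j h1 h2 hj
      rw [abs_of_nonpos (by omega), abs_of_nonpos (by omega)]
      omega
    · exact le_refl _
end

section
/- Let n ≥ 2 and let σ : ℤ → ℤ be an n-periodic bijection whose length ℓ(σ) = Σ_{1 ≤ i < j ≤ n} |⌊(σ(j)-σ(i))/n⌋| is minimal among all n-periodic bijections σ' with σ'(i) ≡ σ(i) (mod n) for all i. Then for all pairs 1 ≤ i < j ≤ n, ⌊(σ(j)-σ(i))/n⌋ ∈ {−1, 0, 1}. -/
/-- Shi length statistic of an n-periodic bijection. -/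
noncomputable def affineLength (n : ℤ) (σ : ℤ → ℤ) : ℤ :=
  ∑ i ∈ Finset.Icc (1 : ℤ) n, ∑ j ∈ Finset.Icc (1 : ℤ) n,
    if i < j then |Int.fdiv (σ j - σ i) n| else 0

/-!
Suppose the crossing number `D = ⌊(σ j - σ i)/n⌋` of a pair `i < j` has `|D| ≥ 2`, and let
`s = sign D`. Moving the values of `σ` on the class of `i` up by `s n` and on the class of `j`
down by `s n` is precomposition with a bijection that fixes residues, so it keeps the circular
permutation. It changes `D` into `D - 2s`. For every third position `a`, the crossing numbers
of `a` with `i` and with `j`, seen from `a`, differ by `D` up to one; the shift moves them one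
step towards each other without crossing, so by convexity of `|·|` the sum of their absolute
values cannot grow. The length therefore drops by at least `2`, contradicting minimality.
-/

open Finset

theorem abs_add_add_abs_sub_le {α : Type*} [CommRing α] [LinearOrder α] [IsStrictOrderedRing α]
    {u v t : α} (ht₀ : 0 ≤ t) (ht : t ≤ v - u) : |u + t| + |v - t| ≤ |u| + |v| := by
  rcases abs_cases (u + t) with ⟨h₁, h₁'⟩ | ⟨h₁, h₁'⟩ <;>
    rcases abs_cases (v - t) with ⟨h₂, h₂'⟩ | ⟨h₂, h₂'⟩ <;>
    rcases abs_cases u with ⟨h₃, h₃'⟩ | ⟨h₃, h₃'⟩ <;>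
    rcases abs_cases v with ⟨h₄, h₄'⟩ | ⟨h₄, h₄'⟩ <;>
    rw [h₁, h₂, h₃, h₄] <;> linarith

theorem Int.abs_add_add_abs_sub_le_of_one_le_mul {u v s : ℤ} (hs : s = 1 ∨ s = -1)
    (h : 1 ≤ s * (v - u)) : |u + s| + |v - s| ≤ |u| + |v| := by
  rcases hs with rfl | rfl
  · exact abs_add_add_abs_sub_le zero_le_one (by linarith)
  · have := abs_add_add_abs_sub_le (u := v) (v := u) zero_le_one (by linarith)
    rw [← sub_eq_add_neg, sub_neg_eq_add]
    linarith

theorem Int.add_ediv_le_ediv_add_ediv_add_one {n : ℤ} (hn : 0 < n) (x y : ℤ) :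
    (x + y) / n ≤ x / n + y / n + 1 := by
  rw [← Int.lt_add_one_iff, Int.ediv_lt_iff_lt_mul hn]
  linarith [Int.lt_ediv_add_one_mul_self x hn, Int.lt_ediv_add_one_mul_self y hn]

theorem Int.add_mul_sub_ediv {n : ℤ} (hn : n ≠ 0) (x y k : ℤ) :
    (x + k * n - y) / n = (x - y) / n + k := by
  rw [add_sub_right_comm, Int.add_mul_ediv_right _ _ hn]

theorem Int.sub_add_mul_ediv {n : ℤ} (hn : n ≠ 0) (x y k : ℤ) :
    (y - (x + k * n)) / n = (y - x) / n - k := by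
  rw [← sub_sub, sub_eq_add_neg, ← neg_mul, Int.add_mul_ediv_right _ _ hn, ← sub_eq_add_neg]

theorem Int.sub_mul_modulus_modEq_iff {n a b c : ℤ} : a - b * n ≡ c [ZMOD n] ↔ a ≡ c [ZMOD n] := by
  rw [sub_eq_add_neg, ← neg_mul, Int.add_mul_modulus_modEq_iff]

theorem Int.ModEq.eq_of_mem_Icc {n a b : ℤ} (h : a ≡ b [ZMOD n]) (ha : a ∈ Icc 1 n)
    (hb : b ∈ Icc 1 n) : a = b := by
  rw [mem_Icc] at ha hb
  have hdiff := Int.eq_zero_of_abs_lt_dvd h.dvd (abs_sub_lt_iff.2 ⟨by omega, by omega⟩)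
  omega

theorem map_add_zsmul_of_map_add_self {α : Type*} [AddCommGroup α] {σ : α → α} {n : α}
    (hper : ∀ x, σ (x + n) = σ x + n) (m : ℤ) (x : α) : σ (x + m • n) = σ x + m • n := by
  have hp : Function.Periodic (fun x => σ x - x) n := fun x => by simp only [hper]; abel
  have := hp.zsmul m x
  simp only [sub_eq_sub_iff_add_eq_add] at this
  rw [← add_left_inj x, this]
  abel

theorem Int.map_modEq_of_map_add_self {σ : ℤ → ℤ} {n a b : ℤ} (hper : ∀ x, σ (x + n) = σ x + n)
    (h : a ≡ b [ZMOD n]) : σ a ≡ σ b [ZMOD n] := by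
  obtain ⟨t, rfl⟩ := Int.modEq_iff_add_fac.1 h
  rw [mul_comm, ← smul_eq_mul, map_add_zsmul_of_map_add_self hper, smul_eq_mul]
  exact Int.modEq_add_mul_modulus_iff.2 rfl

theorem Finset.sum_sum_eq_pair_add_sdiff {ι M : Type*} [DecidableEq ι] [AddCommMonoid M]
    {s : Finset ι} {i j : ι} (hi : i ∈ s) (hj : j ∈ s) (hij : i ≠ j) (f : ι → ι → M) :
    ∑ a ∈ s, ∑ b ∈ s, f a b =
      f i i + f i j + f j i + f j j + ∑ a ∈ s \ {i, j}, (f i a + f a i + f j a + f a j) +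
        ∑ a ∈ s \ {i, j}, ∑ b ∈ s \ {i, j}, f a b := by
  have split (g : ι → M) : ∑ a ∈ s, g a = g i + g j + ∑ a ∈ s \ {i, j}, g a := by
    rw [← sum_sdiff (insert_subset hi (singleton_subset_iff.2 hj)), sum_pair hij, add_comm]
  simp only [split, sum_add_distrib]
  abel

def swapShift (n p q s x : ℤ) : ℤ :=
  if x ≡ p [ZMOD n] then x + s * n else if x ≡ q [ZMOD n] then x - s * n else x

section swapShift

variable {n p q s x : ℤ}

theorem swapShift_of_modEq (h : x ≡ p [ZMOD n]) : swapShift n p q s x = x + s * n :=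
  if_pos h

theorem swapShift_of_modEq_right (hp : ¬x ≡ p [ZMOD n]) (hq : x ≡ q [ZMOD n]) :
    swapShift n p q s x = x - s * n := by
  rw [swapShift, if_neg hp, if_pos hq]

theorem swapShift_of_not_modEq (hp : ¬x ≡ p [ZMOD n]) (hq : ¬x ≡ q [ZMOD n]) :
    swapShift n p q s x = x := by
  rw [swapShift, if_neg hp, if_neg hq]

theorem swapShift_modEq : swapShift n p q s x ≡ x [ZMOD n] := by
  unfold swapShift
  split_ifs
  · exact Int.add_mul_modulus_modEq_iff.2 rfl
  · exact Int.sub_mul_modulus_modEq_iff.2 rfl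
  · rfl

theorem swapShift_add_self : swapShift n p q s (x + n) = swapShift n p q s x + n := by
  simp only [swapShift, Int.add_modulus_modEq_iff]
  split_ifs <;> ring

theorem swapShift_neg_swapShift (x : ℤ) : swapShift n p q (-s) (swapShift n p q s x) = x := by
  by_cases hp : x ≡ p [ZMOD n]
  · rw [swapShift_of_modEq hp, swapShift_of_modEq (Int.add_mul_modulus_modEq_iff.2 hp)]
    ring
  by_cases hq : x ≡ q [ZMOD n]
  · rw [swapShift_of_modEq_right hp hq, swapShift_of_modEq_right
      (mt Int.sub_mul_modulus_modEq_iff.1 hp) (Int.sub_mul_modulus_modEq_iff.2 hq)]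
    ring
  · rw [swapShift_of_not_modEq hp hq, swapShift_of_not_modEq hp hq]

theorem swapShift_bijective : Function.Bijective (swapShift n p q s) :=
  Function.bijective_iff_has_inverse.2 ⟨swapShift n p q (-s), swapShift_neg_swapShift,
    fun x => by simpa using swapShift_neg_swapShift (s := -s) x⟩

theorem comp_swapShift_add_self {σ : ℤ → ℤ} (hper : ∀ x, σ (x + n) = σ x + n) (x : ℤ) :
    (σ ∘ swapShift n p q s) (x + n) = (σ ∘ swapShift n p q s) x + n := by
  simp only [Function.comp, swapShift_add_self, hper]

theorem comp_swapShift_apply_left {σ : ℤ → ℤ} (hper : ∀ x, σ (x + n) = σ x + n) :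
    (σ ∘ swapShift n p q s) p = σ p + s * n := by
  simp only [Function.comp, swapShift_of_modEq (Int.ModEq.refl p)]
  exact map_add_zsmul_of_map_add_self hper s p

theorem comp_swapShift_apply_right {σ : ℤ → ℤ} (hper : ∀ x, σ (x + n) = σ x + n)
    (hqp : ¬q ≡ p [ZMOD n]) : (σ ∘ swapShift n p q s) q = σ q + (-s) * n := by
  simp only [Function.comp, swapShift_of_modEq_right hqp rfl, sub_eq_add_neg, ← neg_mul]
  exact map_add_zsmul_of_map_add_self hper (-s) q

end swapShift

def absCrossing (n : ℤ) (τ : ℤ → ℤ) (a b : ℤ) : ℤ := if a < b then |(τ b - τ a) / n| else 0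

theorem absCrossing_of_lt {n a b : ℤ} {τ : ℤ → ℤ} (h : a < b) :
    absCrossing n τ a b = |(τ b - τ a) / n| :=
  if_pos h

theorem absCrossing_of_le {n a b : ℤ} {τ : ℤ → ℤ} (h : b ≤ a) : absCrossing n τ a b = 0 :=
  if_neg h.not_gt

theorem affineLength_eq_sum_absCrossing {n : ℤ} (hn : 0 ≤ n) (τ : ℤ → ℤ) :
    affineLength n τ = ∑ a ∈ Icc 1 n, ∑ b ∈ Icc 1 n, absCrossing n τ a b := by
  simp only [affineLength, absCrossing, Int.fdiv_eq_ediv_of_nonneg _ hn]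

section shift

variable {n s i j : ℤ} {τ τ' : ℤ → ℤ}

theorem absCrossing_add_two_le (hn : 0 < n) (hs : s = 1 ∨ s = -1)
    (hD : 2 ≤ s * ((τ j - τ i) / n)) (hij : i < j)
    (hτi : τ' i = τ i + s * n) (hτj : τ' j = τ j + (-s) * n) :
    absCrossing n τ' i j + 2 ≤ absCrossing n τ i j := by
  rw [absCrossing_of_lt hij, absCrossing_of_lt hij, hτi, hτj, Int.add_mul_sub_ediv hn.ne',
    Int.sub_add_mul_ediv hn.ne']
  generalize (τ j - τ i) / n = D at hD ⊢
  rcases hs with rfl | rfl <;> simp only [Int.abs_eq_natAbs] <;> omega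

theorem absCrossing_add_absCrossing_le (hn : 0 < n) (hs : s = 1 ∨ s = -1)
    (hD : 2 ≤ s * ((τ j - τ i) / n)) (hij : i < j)
    (hτi : τ' i = τ i + s * n) (hτj : τ' j = τ j + (-s) * n)
    {a : ℤ} (hai : a ≠ i) (haj : a ≠ j) (hτa : τ' a = τ a) :
    absCrossing n τ' i a + absCrossing n τ' a i + absCrossing n τ' j a + absCrossing n τ' a j ≤
      absCrossing n τ i a + absCrossing n τ a i + absCrossing n τ j a + absCrossing n τ a j := by
  have split (x y z : ℤ) (h : x + y = z) : x / n + y / n ≤ z / n ∧ z / n ≤ x / n + y / n + 1 :=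
    h ▸ ⟨Int.ediv_add_ediv_le_add_ediv hn, Int.add_ediv_le_ediv_add_ediv_add_one hn x y⟩
  rcases lt_or_gt_of_ne hai with hai | hia
  · obtain ⟨h₁, h₂⟩ := split (τ i - τ a) (τ j - τ i) (τ j - τ a) (by ring)
    simp only [absCrossing_of_le hai.le, absCrossing_of_le (hai.trans hij).le,
      absCrossing_of_lt hai, absCrossing_of_lt (hai.trans hij), hτi, hτj, hτa,
      Int.add_mul_sub_ediv hn.ne', add_zero, zero_add, ← sub_eq_add_neg]
    refine Int.abs_add_add_abs_sub_le_of_one_le_mul hs ?_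
    rcases hs with rfl | rfl <;> omega
  rcases lt_or_gt_of_ne haj with haj | hja
  · obtain ⟨h₁, h₂⟩ := split (τ a - τ i) (τ j - τ a) (τ j - τ i) (by ring)
    simp only [absCrossing_of_le hia.le, absCrossing_of_le haj.le,
      absCrossing_of_lt hia, absCrossing_of_lt haj, hτi, hτj, hτa,
      Int.sub_add_mul_ediv hn.ne', Int.add_mul_sub_ediv hn.ne', add_zero, ← sub_eq_add_neg]
    have := Int.abs_add_add_abs_sub_le_of_one_le_mul (u := -((τ a - τ i) / n))
      (v := (τ j - τ a) / n) hs (by rcases hs with rfl | rfl <;> omega)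
    rwa [neg_add_eq_sub, abs_sub_comm, abs_neg] at this
  · obtain ⟨h₁, h₂⟩ := split (τ a - τ j) (τ j - τ i) (τ a - τ i) (by ring)
    simp only [absCrossing_of_le hia.le, absCrossing_of_le hja.le,
      absCrossing_of_lt hia, absCrossing_of_lt hja, hτi, hτj, hτa,
      Int.sub_add_mul_ediv hn.ne', add_zero, sub_neg_eq_add]
    have := Int.abs_add_add_abs_sub_le_of_one_le_mul (u := (τ a - τ j) / n)
      (v := (τ a - τ i) / n) hs (by rcases hs with rfl | rfl <;> omega)
    linarith

theorem affineLength_add_two_le (hn : 0 < n) (hs : s = 1 ∨ s = -1)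
    (hD : 2 ≤ s * ((τ j - τ i) / n)) (hi : 1 ≤ i) (hij : i < j) (hj : j ≤ n)
    (hτi : τ' i = τ i + s * n) (hτj : τ' j = τ j + (-s) * n)
    (hτ : ∀ a ∈ Icc 1 n \ {i, j}, τ' a = τ a) :
    affineLength n τ' + 2 ≤ affineLength n τ := by
  have hiS : i ∈ Icc 1 n := mem_Icc.2 ⟨hi, hij.le.trans hj⟩
  have hjS : j ∈ Icc 1 n := mem_Icc.2 ⟨hi.trans hij.le, hj⟩
  simp only [affineLength_eq_sum_absCrossing hn.le, sum_sum_eq_pair_add_sdiff hiS hjS hij.ne,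
    absCrossing_of_le le_rfl, absCrossing_of_le hij.le]
  have hrest : ∑ a ∈ Icc 1 n \ {i, j}, ∑ b ∈ Icc 1 n \ {i, j}, absCrossing n τ' a b =
      ∑ a ∈ Icc 1 n \ {i, j}, ∑ b ∈ Icc 1 n \ {i, j}, absCrossing n τ a b :=
    sum_congr rfl fun a ha => sum_congr rfl fun b hb => by
      simp only [absCrossing, hτ a ha, hτ b hb]
  have hcross := sum_le_sum fun a (ha : a ∈ Icc 1 n \ {i, j}) => by
    have ha' : a ≠ i ∧ a ≠ j := by simpa using (mem_sdiff.1 ha).2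
    exact absCrossing_add_absCrossing_le hn hs hD hij hτi hτj ha'.1 ha'.2 (hτ a ha)
  linarith [absCrossing_add_two_le hn hs hD hij hτi hτj]

end shift

/-- If σ has minimal length among all n-periodic bijections representing the same
circular permutation, then all crossing numbers lie in {−1, 0, 1}. -/
theorem stmt_5 (n : ℤ) (hn : 2 ≤ n) (σ : ℤ → ℤ)
    (hbij : Function.Bijective σ) (hper : ∀ i : ℤ, σ (i + n) = σ i + n)
    (hmin : ∀ σ' : ℤ → ℤ, Function.Bijective σ' → (∀ i : ℤ, σ' (i + n) = σ' i + n) →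
      (∀ i : ℤ, σ' i ≡ σ i [ZMOD n]) → affineLength n σ ≤ affineLength n σ')
    (i j : ℤ) (hi : 1 ≤ i) (hij : i < j) (hj : j ≤ n) :
    Int.fdiv (σ j - σ i) n = -1 ∨ Int.fdiv (σ j - σ i) n = 0 ∨
      Int.fdiv (σ j - σ i) n = 1 := by
  have hn0 : 0 < n := by omega
  rw [Int.fdiv_eq_ediv_of_nonneg _ hn0.le]
  by_contra hfar
  obtain ⟨s, hs, hD⟩ : ∃ s : ℤ, (s = 1 ∨ s = -1) ∧ 2 ≤ s * ((σ j - σ i) / n) := by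
    generalize (σ j - σ i) / n = D at hfar
    rcases le_or_gt 0 D with h | h
    exacts [⟨1, .inl rfl, by omega⟩, ⟨-1, .inr rfl, by omega⟩]
  have hiS : i ∈ Icc 1 n := mem_Icc.2 ⟨hi, hij.le.trans hj⟩
  have hjS : j ∈ Icc 1 n := mem_Icc.2 ⟨hi.trans hij.le, hj⟩
  have hfix : ∀ a ∈ Icc 1 n \ {i, j}, (σ ∘ swapShift n i j s) a = σ a := fun a ha => by
    obtain ⟨haS, hane⟩ := mem_sdiff.1 ha
    simp only [mem_insert, mem_singleton, not_or] at hane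
    exact congrArg σ (swapShift_of_not_modEq (fun h => hane.1 (h.eq_of_mem_Icc haS hiS))
      (fun h => hane.2 (h.eq_of_mem_Icc haS hjS)))
  have hshorter := affineLength_add_two_le hn0 hs hD hi hij hj (comp_swapShift_apply_left hper)
    (comp_swapShift_apply_right hper fun h => hij.ne' (h.eq_of_mem_Icc hjS hiS)) hfix
  have hminimal := hmin (σ ∘ swapShift n i j s) (hbij.comp swapShift_bijective)
    (comp_swapShift_add_self hper) (fun _ => Int.map_modEq_of_map_add_self hper swapShift_modEq)
  omega
end

section
/- Let n ≥ 2 and let σ : ℤ → ℤ be an n-periodic bijection whose length ℓ(σ) = Σ_{1 ≤ i < j ≤ n} |⌊(σ(j)-σ(i))/n⌋| is minimal among all n-periodic bijections agreeing with σ mod n. Then max{σ(i) : 1 ≤ i ≤ n} − min{σ(i) : 1 ≤ i ≤ n} < 2n. -/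
open Finset Function

theorem Finset.sum_sum_insert_insert {α M : Type*} [DecidableEq α] [AddCommMonoid M]
    (f : α → α → M) {a b : α} {t : Finset α} (ha : a ∉ insert b t) (hb : b ∉ t) :
    ∑ i ∈ insert a (insert b t), ∑ j ∈ insert a (insert b t), f i j =
      f a a + f b b + (f a b + f b a) + ∑ k ∈ t, ((f k a + f a k) + (f k b + f b k)) +
        ∑ i ∈ t, ∑ j ∈ t, f i j := by
  simp only [sum_insert ha, sum_insert hb, sum_add_distrib]
  abel

theorem eq_of_modEq_of_mem_Icc {n k l : ℤ} (hk : k ∈ Icc 1 n) (hl : l ∈ Icc 1 n)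
    (h : k ≡ l [ZMOD n]) : k = l := by
  rw [mem_Icc] at hk hl
  have := Int.eq_zero_of_abs_lt_dvd h.dvd (abs_lt.2 ⟨by omega, by omega⟩)
  omega

section Periodic

variable {n : ℤ} {σ : ℤ → ℤ}

theorem map_add_mul_of_map_add (hper : ∀ i, σ (i + n) = σ i + n) (k m : ℤ) :
    σ (k + m * n) = σ k + m * n := by
  have hdisp : Periodic (fun k => σ k - k) n := fun k => by simp only [hper]; ring
  have := hdisp.int_mul m k
  simp only [Int.cast_id] at this
  linarith

theorem bijective_add_mul_of_periodic (hσ : Bijective σ) (hper : ∀ i, σ (i + n) = σ i + n)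
    {c : ℤ → ℤ} (hc : Periodic c n) : Bijective fun k => σ k + c k * n := by
  have hc' (k m : ℤ) : c (k + m * n) = c k := by simpa using hc.int_mul m k
  constructor
  · intro a b hab
    simp only at hab
    have hσa : σ a = σ (b + (c b - c a) * n) := by
      rw [map_add_mul_of_map_add hper]; linarith
    have ha : a = b + (c b - c a) * n := hσ.injective hσa
    have hca : c a = c b := by rw [ha, hc']
    rw [ha, hca, sub_self, zero_mul, add_zero]
  · intro m
    obtain ⟨a, rfl⟩ := hσ.surjective m
    refine ⟨a + (-c a) * n, ?_⟩
    simp only [map_add_mul_of_map_add hper, hc']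
    ring

end Periodic

def lengthTerm (n i j a b : ℤ) : ℤ := if i < j then |(b - a).fdiv n| else 0

def pairLength (n i j a b : ℤ) : ℤ := lengthTerm n i j a b + lengthTerm n j i b a

section PairLength

variable {n i j a b : ℤ}

theorem lengthTerm_self (n i a b : ℤ) : lengthTerm n i i a b = 0 := by simp [lengthTerm]

theorem pairLength_comm : pairLength n i j a b = pairLength n j i b a := add_comm _ _

theorem pairLength_add_add (c : ℤ) : pairLength n i j (a + c) (b + c) = pairLength n i j a b := by
  simp [pairLength, lengthTerm]

theorem pairLength_eq (hn : 0 < n) : pairLength n i j a b =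
    if i < j then |(b - a) / n| else if j < i then |(a - b) / n| else 0 := by
  rcases lt_trichotomy i j with h | rfl | h
  · simp [pairLength, lengthTerm, h, h.not_gt, Int.fdiv_eq_ediv_of_nonneg _ hn.le]
  · simp [pairLength, lengthTerm]
  · simp [pairLength, lengthTerm, h, h.not_gt, Int.fdiv_eq_ediv_of_nonneg _ hn.le]

theorem pairLength_sub_eq (hn : 0 < n) : pairLength n i j a (b - n) =
    if i < j then |(b - a) / n - 1| else if j < i then |(a - b) / n + 1| else 0 := by
  have hshift (d m : ℤ) : (d + m * n) / n = d / n + m := Int.add_mul_ediv_right d m hn.ne'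
  rw [pairLength_eq hn, show b - n - a = b - a + -1 * n by ring,
    show a - (b - n) = a - b + 1 * n by ring, hshift, hshift, ← sub_eq_add_neg]

theorem pairLength_sub_le (hn : 0 < n) : pairLength n i j a (b - n) ≤ pairLength n i j a b + 1 := by
  rw [pairLength_sub_eq hn, pairLength_eq hn]
  split_ifs <;> grind

theorem pairLength_sub_add_one_le (hn : 0 < n) (hij : i ≠ j) (hab : a + n ≤ b) :
    pairLength n i j a (b - n) + 1 ≤ pairLength n i j a b := by
  rw [pairLength_sub_eq hn, pairLength_eq hn]
  have h₁ : 1 ≤ (b - a) / n := (Int.le_ediv_iff_mul_le hn).2 (by linarith)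
  have h₂ : (a - b) / n < 0 := Int.ediv_neg_of_neg_of_pos (by linarith) hn
  split_ifs <;> grind

theorem pairLength_add_sub_add_two_le (hn : 0 < n) (hij : i ≠ j) (hab : a + 2 * n ≤ b) :
    pairLength n i j (a + n) (b - n) + 2 ≤ pairLength n i j a b := by
  have h₁ := pairLength_sub_add_one_le (a := a) (b := b - n) hn hij (by linarith)
  have h₂ := pairLength_sub_add_one_le (a := a) (b := b) hn hij (by linarith)
  rw [show b - n = b - n - n + n by ring, pairLength_add_add]
  linarith

theorem pairLength_add_add_pairLength_sub_le {k : ℤ} (hn : 0 < n) (hkj : k ≠ j) (hki : k ≠ i)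
    (hab : a + 2 * n ≤ b) (u : ℤ) :
    pairLength n k j u (a + n) + pairLength n k i u (b - n) ≤
      pairLength n k j u a + pairLength n k i u b := by
  have hj : pairLength n k j u (a + n) = pairLength n j k a (u - n) := by
    rw [pairLength_comm, show u = u - n + n by ring, pairLength_add_add, sub_add_cancel]
  rw [hj, pairLength_comm (i := k) (j := j)]
  by_cases hu : a + n ≤ u
  · have := pairLength_sub_add_one_le hn hkj.symm hu
    have := pairLength_sub_le (i := k) (j := i) (a := u) (b := b) hn
    linarith
  · have := pairLength_sub_le (i := j) (j := k) (a := a) (b := u) hn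
    have := pairLength_sub_add_one_le (a := u) (b := b) hn hki (by linarith)
    linarith

end PairLength

theorem affineLength_eq_sum_lengthTerm (n : ℤ) (σ : ℤ → ℤ) :
    affineLength n σ = ∑ i ∈ Icc 1 n, ∑ j ∈ Icc 1 n, lengthTerm n i j (σ i) (σ j) :=
  rfl

theorem affineLength_add_two_le_s6 {n i₀ j₀ : ℤ} {σ σ' : ℤ → ℤ} (hn : 0 < n)
    (hi₀ : i₀ ∈ Icc 1 n) (hj₀ : j₀ ∈ Icc 1 n) (hgap : σ j₀ + 2 * n ≤ σ i₀)
    (hσ'i₀ : σ' i₀ = σ i₀ - n) (hσ'j₀ : σ' j₀ = σ j₀ + n)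
    (hσ' : ∀ k ∈ Icc 1 n, k ≠ i₀ → k ≠ j₀ → σ' k = σ k) :
    affineLength n σ' + 2 ≤ affineLength n σ := by
  have hji : j₀ ≠ i₀ := by rintro rfl; linarith
  set t := ((Icc 1 n).erase j₀).erase i₀
  have hmem : ∀ k ∈ t, k ∈ Icc 1 n ∧ k ≠ i₀ ∧ k ≠ j₀ := fun k hk => by
    simp only [t, mem_erase] at hk; tauto
  have hs : Icc 1 n = insert j₀ (insert i₀ t) := by
    rw [insert_erase (mem_erase.2 ⟨hji.symm, hi₀⟩), insert_erase hj₀]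
  have hj₀t : j₀ ∉ insert i₀ t := by simp [t, hji]
  have hi₀t : i₀ ∉ t := fun h => (hmem i₀ h).2.1 rfl
  have hcross := pairLength_add_sub_add_two_le hn hji hgap
  have hk : ∑ k ∈ t, (pairLength n k j₀ (σ' k) (σ' j₀) + pairLength n k i₀ (σ' k) (σ' i₀)) ≤
      ∑ k ∈ t, (pairLength n k j₀ (σ k) (σ j₀) + pairLength n k i₀ (σ k) (σ i₀)) := by
    refine sum_le_sum fun k hk => ?_
    obtain ⟨hks, hki, hkj⟩ := hmem k hk
    rw [hσ' k hks hki hkj, hσ'i₀, hσ'j₀]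
    exact pairLength_add_add_pairLength_sub_le hn hkj hki hgap _
  have htt : ∑ i ∈ t, ∑ j ∈ t, lengthTerm n i j (σ' i) (σ' j) =
      ∑ i ∈ t, ∑ j ∈ t, lengthTerm n i j (σ i) (σ j) := by
    refine sum_congr rfl fun i hi => sum_congr rfl fun j hj => ?_
    obtain ⟨his, hii, hij⟩ := hmem i hi
    obtain ⟨hjs, hji, hjj⟩ := hmem j hj
    rw [hσ' i his hii hij, hσ' j hjs hji hjj]
  simp only [affineLength_eq_sum_lengthTerm, hs, sum_sum_insert_insert _ hj₀t hi₀t,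
    lengthTerm_self, ← pairLength.eq_def] at hk htt ⊢
  rw [hσ'i₀, hσ'j₀] at hk ⊢
  linarith

theorem exists_shift_classes {n i₀ j₀ : ℤ} {σ : ℤ → ℤ} (hσ : Bijective σ)
    (hper : ∀ i, σ (i + n) = σ i + n) (hi₀ : i₀ ∈ Icc 1 n) (hj₀ : j₀ ∈ Icc 1 n) (hij : i₀ ≠ j₀) :
    ∃ σ' : ℤ → ℤ, Bijective σ' ∧ (∀ i, σ' (i + n) = σ' i + n) ∧
      (∀ i, σ' i ≡ σ i [ZMOD n]) ∧ σ' i₀ = σ i₀ - n ∧ σ' j₀ = σ j₀ + n ∧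
      ∀ k ∈ Icc 1 n, k ≠ i₀ → k ≠ j₀ → σ' k = σ k := by
  set c : ℤ → ℤ := fun k =>
    (if k ≡ j₀ [ZMOD n] then 1 else 0) - (if k ≡ i₀ [ZMOD n] then 1 else 0)
  have hc : Periodic c n := fun k => by simp only [c, Int.add_modulus_modEq_iff]
  have hwindow {k l : ℤ} (hk : k ∈ Icc 1 n) (hl : l ∈ Icc 1 n) :
      k ≡ l [ZMOD n] ↔ k = l :=
    ⟨eq_of_modEq_of_mem_Icc hk hl, fun h => h ▸ Int.ModEq.refl k⟩
  refine ⟨fun k => σ k + c k * n, bijective_add_mul_of_periodic hσ hper hc, fun i => ?_,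
    fun i => ?_, ?_, ?_, fun k hk hki hkj => ?_⟩
  · simp only [hper, hc i]; ring
  · simp [Int.ModEq]
  · simp [c, hwindow hi₀ hj₀, hij, sub_eq_add_neg]
  · simp [c, hwindow hj₀ hi₀, hij.symm]
  · simp [c, hwindow hk hi₀, hwindow hk hj₀, hki, hkj]

theorem stmt_6_general (n : ℤ) (σ : ℤ → ℤ)
    (hbij : Function.Bijective σ) (hper : ∀ i : ℤ, σ (i + n) = σ i + n)
    (hmin : ∀ σ' : ℤ → ℤ, Function.Bijective σ' → (∀ i : ℤ, σ' (i + n) = σ' i + n) →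
      (∀ i : ℤ, σ' i ≡ σ i [ZMOD n]) → affineLength n σ ≤ affineLength n σ')
    (hne : (Finset.Icc (1 : ℤ) n).Nonempty) :
    (Finset.Icc (1 : ℤ) n).sup' hne σ - (Finset.Icc (1 : ℤ) n).inf' hne σ < 2 * n := by
  have hn : 0 < n := by have := Finset.nonempty_Icc.1 hne; omega
  obtain ⟨i₀, hi₀, hmax⟩ := exists_mem_eq_sup' hne σ
  obtain ⟨j₀, hj₀, hmin₀⟩ := exists_mem_eq_inf' hne σ
  rw [hmax, hmin₀]
  by_contra! hgap
  have hij : i₀ ≠ j₀ := by rintro rfl; omega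
  obtain ⟨σ', hbij', hper', hmod, hi, hj, hrest⟩ := exists_shift_classes hbij hper hi₀ hj₀ hij
  have := affineLength_add_two_le_s6 hn hi₀ hj₀ (by omega) hi hj hrest
  have := hmin σ' hbij' hper' hmod
  omega

/-- For a minimal-length representative, max σ(i) − min σ(i) over the window
{1,…,n} is less than 2n. -/
theorem stmt_6 (n : ℤ) (hn : 2 ≤ n) (σ : ℤ → ℤ)
    (hbij : Function.Bijective σ) (hper : ∀ i : ℤ, σ (i + n) = σ i + n)
    (hmin : ∀ σ' : ℤ → ℤ, Function.Bijective σ' → (∀ i : ℤ, σ' (i + n) = σ' i + n) →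
      (∀ i : ℤ, σ' i ≡ σ i [ZMOD n]) → affineLength n σ ≤ affineLength n σ')
    (hne : (Finset.Icc (1 : ℤ) n).Nonempty) :
    (Finset.Icc (1 : ℤ) n).sup' hne σ - (Finset.Icc (1 : ℤ) n).inf' hne σ < 2 * n :=
  stmt_6_general n σ hbij hper hmin hne
end

section
/- Let n ≥ 2 and let σ : ℤ → ℤ be an n-periodic bijection that is balanced (Σ_{i=1}^n σ(i) = n(n+1)/2). For i ∈ {1,...,n} define the nett crossing number ν_i(σ) = Σ_{j: i<j≤n} ⌊(σ(j)−σ(i))/n⌋ − Σ_{j: 1≤j<i} ⌊(σ(i)−σ(j))/n⌋. Then for every i ∈ {1,...,n}, ν_i(σ) = i − σ(i). -/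
/-- For a balanced n-periodic bijection, the nett crossing number
ν_i(σ) = Σ_{j>i} ⌊(σ(j)−σ(i))/n⌋ − Σ_{j<i} ⌊(σ(i)−σ(j))/n⌋ equals i − σ(i). -/
theorem stmt_8 (n : ℤ) (hn : 2 ≤ n) (σ : ℤ → ℤ)
    (hbij : Function.Bijective σ) (hper : ∀ i : ℤ, σ (i + n) = σ i + n)
    (hbal : ∑ i ∈ Finset.Icc (1 : ℤ) n, σ i = ∑ i ∈ Finset.Icc (1 : ℤ) n, i)
    (i : ℤ) (hi : 1 ≤ i) (hin : i ≤ n) :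
    (∑ j ∈ (Finset.Icc (1 : ℤ) n).filter (fun j => i < j), Int.fdiv (σ j - σ i) n) -
      (∑ j ∈ (Finset.Icc (1 : ℤ) n).filter (fun j => j < i), Int.fdiv (σ i - σ j) n) =
      i - σ i := by
  have hn0 : (0:ℤ) < n := by omega
  have hnne : n ≠ 0 := by omega
  set S := Finset.Icc (1 : ℤ) n with hS
  have hiS : i ∈ S := by simp [hS, Finset.mem_Icc]; omega
  -- full periodicity
  have hper' : ∀ m k : ℤ, σ (k + m * n) = σ k + m * n := by
    intro m
    induction m using Int.induction_on with
    | zero => simp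
    | succ m ih =>
        intro k
        have h1 : σ (k + m * n + n) = σ (k + m * n) + n := hper _
        have h2 : k + ((m : ℤ) + 1) * n = k + m * n + n := by ring
        rw [h2, h1, ih]; ring
    | pred m ih =>
        intro k
        have h1 : σ (k + (-(m:ℤ) - 1) * n + n) = σ (k + (-(m:ℤ) - 1) * n) + n := hper _
        have h2 : k + (-(m:ℤ) - 1) * n + n = k + (-(m:ℤ)) * n := by ring
        rw [h2, ih] at h1
        linarith [h1]
  -- key injectivity modulo n
  have hkey : ∀ j ∈ S, ∀ k ∈ S, n ∣ σ j - σ k → j = k := by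
    intro j hj k hk hd
    obtain ⟨m, hm⟩ := hd
    have h1 : σ j = σ (k + m * n) := by rw [hper' m k]; linarith [hm]
    have h2 : j = k + m * n := hbij.injective h1
    simp only [hS, Finset.mem_Icc] at hj hk
    have hd2 : n ∣ j - k := ⟨m, by rw [h2]; ring⟩
    have : j - k = 0 := Int.eq_zero_of_abs_lt_dvd hd2 (by rw [abs_lt]; omega)
    omega
  -- generic: sums of residues are the "full" sum
  have himage : ∀ g : ℤ → ℤ, (∀ j ∈ S, ∀ k ∈ S, g j % n = g k % n → j = k) →
      ∑ j ∈ S, g j % n = ∑ x ∈ Finset.Ico (0:ℤ) n, x := by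
    intro g hg
    have hinj : Set.InjOn (fun j => g j % n) ↑S := by
      intro j hj k hk h
      exact hg j (by simpa using hj) k (by simpa using hk) h
    have hsub : S.image (fun j => g j % n) ⊆ Finset.Ico 0 n := by
      intro x hx
      simp only [Finset.mem_image] at hx
      obtain ⟨j, _, rfl⟩ := hx
      exact Finset.mem_Ico.mpr ⟨Int.emod_nonneg _ hnne, Int.emod_lt_of_pos _ hn0⟩
    have hcard : (Finset.Ico (0:ℤ) n).card ≤ (S.image (fun j => g j % n)).card := by
      rw [Finset.card_image_of_injOn hinj]
      simp [hS, Int.card_Icc, Int.card_Ico]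
    have heq := Finset.eq_of_subset_of_card_le hsub hcard
    have := Finset.sum_image (f := fun x : ℤ => x)
      (s := S) (g := fun j => g j % n) (fun x hx y hy h => hg x hx y hy h)
    rw [← this, heq]
  have hr1 : ∑ j ∈ S, (σ j - σ i) % n = ∑ x ∈ Finset.Ico (0:ℤ) n, x := by
    apply himage
    intro j hj k hk h
    apply hkey j hj k hk
    have := Int.emod_eq_emod_iff_emod_sub_eq_zero.mp h
    have hd : n ∣ (σ j - σ i) - (σ k - σ i) := Int.dvd_of_emod_eq_zero this
    have : (σ j - σ i) - (σ k - σ i) = σ j - σ k := by ring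
    rwa [this] at hd
  have hr2 : ∑ j ∈ S, (j - i) % n = ∑ x ∈ Finset.Ico (0:ℤ) n, x := by
    apply himage
    intro j hj k hk h
    have := Int.emod_eq_emod_iff_emod_sub_eq_zero.mp h
    have hd : n ∣ j - k := by
      have h2 : (j - i) - (k - i) = j - k := by ring
      have := Int.dvd_of_emod_eq_zero this
      rwa [h2] at this
    simp only [hS, Finset.mem_Icc] at hj hk
    have : j - k = 0 := Int.eq_zero_of_abs_lt_dvd hd (by rw [abs_lt]; omega)
    omega
  -- negative small quotient lemma
  have hneg : ∀ x : ℤ, -n ≤ x → x < 0 → x / n = -1 := by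
    intro x h1 h2
    have h3 : (x + 1 * n) / n = x / n + 1 := Int.add_mul_ediv_right x 1 hnne
    have h4 : (x + 1 * n) / n = 0 := Int.ediv_eq_zero_of_lt (by omega) (by omega)
    linarith [h3, h4]
  -- sum decomposition via div/mod
  have hdm : ∀ g : ℤ → ℤ, ∑ j ∈ S, g j = n * (∑ j ∈ S, g j / n) + ∑ j ∈ S, g j % n := by
    intro g
    rw [Finset.mul_sum, ← Finset.sum_add_distrib]
    exact (Finset.sum_congr rfl fun j _ => (Int.mul_ediv_add_emod (g j) n).symm)
  have hcardS : ((S.card : ℤ)) = n := by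
    simp [hS, Int.card_Icc]; omega
  have hsum1 : ∑ j ∈ S, (σ j - σ i) = (∑ j ∈ S, j) - n * σ i := by
    rw [Finset.sum_sub_distrib, Finset.sum_const, nsmul_eq_mul, hcardS, hbal]
  have hsum2 : ∑ j ∈ S, (j - i) = (∑ j ∈ S, j) - n * i := by
    rw [Finset.sum_sub_distrib, Finset.sum_const, nsmul_eq_mul, hcardS]
  -- Σ q = Σ q' + i - σ i
  have hQQ : ∑ j ∈ S, (σ j - σ i) / n = (∑ j ∈ S, (j - i) / n) + i - σ i := by
    have e1 := hdm (fun j => σ j - σ i)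
    have e2 := hdm (fun j => j - i)
    rw [hsum1, hr1] at e1
    rw [hsum2, hr2] at e2
    have : n * (∑ j ∈ S, (σ j - σ i) / n) = n * ((∑ j ∈ S, (j - i) / n) + i - σ i) := by ring_nf; linarith [e1, e2]
    exact mul_left_cancel₀ hnne this
  -- compute Σ q'
  have hfiltlt : S.filter (fun j => j < i) = Finset.Ico 1 i := by
    ext j
    simp only [hS, Finset.mem_filter, Finset.mem_Icc, Finset.mem_Ico]
    omega
  have hcardlt : (((S.filter (fun j => j < i)).card : ℤ)) = i - 1 := by
    rw [hfiltlt]; simp [Int.card_Ico]; omega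
  have hQ' : ∑ j ∈ S, (j - i) / n = 1 - i := by
    rw [← Finset.sum_filter_add_sum_filter_not S (fun j => j < i)]
    have hA : ∑ j ∈ S.filter (fun j => j < i), (j - i) / n
        = ∑ j ∈ S.filter (fun j => j < i), (-1 : ℤ) := by
      apply Finset.sum_congr rfl
      intro j hj
      simp only [hS, Finset.mem_filter, Finset.mem_Icc] at hj
      exact hneg _ (by omega) (by omega)
    have hB : ∑ j ∈ S.filter (fun j => ¬ j < i), (j - i) / n = 0 := by
      apply Finset.sum_eq_zero
      intro j hj
      simp only [hS, Finset.mem_filter, Finset.mem_Icc] at hj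
      exact Int.ediv_eq_zero_of_lt (by omega) (by omega)
    rw [hA, hB, Finset.sum_const, nsmul_eq_mul, hcardlt]
    ring
  have hQ : ∑ j ∈ S, (σ j - σ i) / n = 1 - σ i := by rw [hQQ, hQ']; ring
  -- flip lemma
  have hflip : ∀ j ∈ S, j ≠ i → (σ i - σ j) / n = -1 - (σ j - σ i) / n := by
    intro j hj hji
    have hnd : ¬ n ∣ (σ j - σ i) := fun hd => hji (hkey j hj i hiS hd)
    set x := σ j - σ i with hx
    have hr0 : 0 < x % n := by
      rcases lt_or_eq_of_le (Int.emod_nonneg x hnne) with h | h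
      · exact h
      · exact absurd (Int.dvd_of_emod_eq_zero h.symm) hnd
    have hrn : x % n < n := Int.emod_lt_of_pos _ hn0
    have hid : n * (x / n) + x % n = x := Int.mul_ediv_add_emod x n
    have h1 : (-x) = (n - x % n) + (-(x/n) - 1) * n := by linarith [hid]
    have h2 : (-x) / n = -(x/n) - 1 := by
      rw [h1, Int.add_mul_ediv_right _ _ hnne,
        Int.ediv_eq_zero_of_lt (by omega) (by omega)]
      ring
    have h3 : σ i - σ j = -x := by rw [hx]; ring
    rw [h3, h2]; ring
  -- split the full sum
  have hins : S.filter (fun j => ¬ j < i) = insert i (S.filter (fun j => i < j)) := by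
    ext j
    simp only [hS, Finset.mem_filter, Finset.mem_Icc, Finset.mem_insert]
    omega
  have hnotmem : i ∉ S.filter (fun j => i < j) := by
    simp [Finset.mem_filter]
  have hsplit : ∑ j ∈ S, (σ j - σ i) / n
      = (∑ j ∈ S.filter (fun j => j < i), (σ j - σ i) / n)
        + ((σ i - σ i) / n
        + ∑ j ∈ S.filter (fun j => i < j), (σ j - σ i) / n) := by
    rw [← Finset.sum_filter_add_sum_filter_not S (fun j => j < i), hins,
      Finset.sum_insert hnotmem]
  have hQi : (σ i - σ i) / n = 0 := by simp
  -- rewrite the B sum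
  have hB : ∑ j ∈ S.filter (fun j => j < i), (σ i - σ j) / n
      = (i - 1) * (-1) - ∑ j ∈ S.filter (fun j => j < i), (σ j - σ i) / n := by
    have : ∑ j ∈ S.filter (fun j => j < i), (σ i - σ j) / n
        = ∑ j ∈ S.filter (fun j => j < i), ((-1 : ℤ) - (σ j - σ i) / n) := by
      apply Finset.sum_congr rfl
      intro j hj
      simp only [Finset.mem_filter] at hj
      exact hflip j hj.1 (by omega)
    rw [this, Finset.sum_sub_distrib, Finset.sum_const, nsmul_eq_mul, hcardlt]
    try ring
  -- finish
  have hfd : ∀ a : ℤ, Int.fdiv a n = a / n := fun a => Int.fdiv_eq_ediv_of_nonneg a (le_of_lt hn0)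
  simp only [hfd]
  rw [hQ, hQi] at hsplit
  rw [hB]
  linarith [hsplit]
end
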